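/- If x ≺ y for nonnegative vectors with nonincreasing components, then there exists a lower triangular row-stochastic matrix L with at most 2n−1 nonzero entries such that y = xL. -/

import Mathlib

/-! With `X = psum x` and `Y = psum y`, the north-west corner rule sends from `x i` to `y j` the
length of `[X i, X (i + 1)] ∩ [Y j, Y (j + 1)]`. Since `X ≤ Y`, nothing is sent above the
diagonal, and since both families of intervals are ordered, the nonzero entries form a chain in
`Fin n × Fin n`, on which `i + j` is injective: at most `2n - 1` of them. Dividing row `i` by
`x i` gives `L`. -/

open Finset Matrix

/-- Prefix sum of the first `k` components. -/
def psum {n : ℕ} (x : Fin n → ℝ) (k : ℕ) : ℝ :=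
  ∑ i ∈ Finset.filter (fun i : Fin n => (i : ℕ) < k) Finset.univ, x i

/-- `x` is majorized by `y` (both assumed sorted nonincreasingly). -/
def Maj {n : ℕ} (x y : Fin n → ℝ) : Prop :=
  (∀ k, k < n → psum x k ≤ psum y k) ∧ (∑ i, x i) = ∑ i, y i

/-- An A-transform: for `i < j` and `λ ∈ [0,1]`, replace `x i` by `x i + λ * x j`
and `x j` by `(1 - λ) * x j`. -/
def ATrans {n : ℕ} (x x' : Fin n → ℝ) : Prop :=
  ∃ (i j : Fin n) (lam : ℝ), i < j ∧ 0 ≤ lam ∧ lam ≤ 1 ∧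
    x' = Function.update (Function.update x i (x i + lam * x j)) j ((1 - lam) * x j)

/-- A B-transform: for `i < j` and `λ ∈ [0,1]`, replace `y i` by `(1 - λ) * y i`
and `y j` by `y j + λ * y i`. -/
def BTrans {n : ℕ} (y y' : Fin n → ℝ) : Prop :=
  ∃ (i j : Fin n) (lam : ℝ), i < j ∧ 0 ≤ lam ∧ lam ≤ 1 ∧
    y' = Function.update (Function.update y i ((1 - lam) * y i)) j (y j + lam * y i)

/-- Lower triangular row-stochastic matrix. -/
def LowerRS {n : ℕ} (L : Matrix (Fin n) (Fin n) ℝ) : Prop :=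
  (∀ i j, 0 ≤ L i j) ∧ (∀ i j : Fin n, i < j → L i j = 0) ∧ (∀ i, ∑ j, L i j = 1)

/-- Upper triangular row-stochastic matrix. -/
def UpperRS {n : ℕ} (U : Matrix (Fin n) (Fin n) ℝ) : Prop :=
  (∀ i j, 0 ≤ U i j) ∧ (∀ i j : Fin n, j < i → U i j = 0) ∧ (∀ i, ∑ j, U i j = 1)

section CornerPlan

variable {X Y : ℕ → ℝ} {a b : ℕ}

/-- For monotone `X` and `Y` this is the length of `[X a, X (a + 1)] ∩ [Y b, Y (b + 1)]`;
written as a mixed second difference, its rows and columns telescope. -/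
def cornerPlan (X Y : ℕ → ℝ) (a b : ℕ) : ℝ :=
  min (X (a + 1)) (Y (b + 1)) - min (X (a + 1)) (Y b) - min (X a) (Y (b + 1)) + min (X a) (Y b)

lemma cornerPlan_comm : cornerPlan X Y a b = cornerPlan Y X b a := by
  simp only [cornerPlan, min_comm (X _)]
  ring

lemma cornerPlan_eq_zero_of_le (hX : Monotone X) (hY : Monotone Y) (h : X (a + 1) ≤ Y b) :
    cornerPlan X Y a b = 0 := by
  have hXa : X a ≤ Y b := (hX a.le_succ).trans h
  have hYb : Y b ≤ Y (b + 1) := hY b.le_succ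
  rw [cornerPlan, min_eq_left (h.trans hYb), min_eq_left h, min_eq_left (hXa.trans hYb),
    min_eq_left hXa]
  ring

lemma cornerPlan_eq_zero_of_ge (hX : Monotone X) (hY : Monotone Y) (h : Y (b + 1) ≤ X a) :
    cornerPlan X Y a b = 0 := by
  rw [cornerPlan_comm]
  exact cornerPlan_eq_zero_of_le hY hX h

lemma cornerPlan_nonneg (hX : Monotone X) (hY : Monotone Y) : 0 ≤ cornerPlan X Y a b := by
  have hXa : X a ≤ X (a + 1) := hX a.le_succ
  have hYb : Y b ≤ Y (b + 1) := hY b.le_succ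
  rcases le_total (X a) (Y b) with h | h
  · have : min (X (a + 1)) (Y b) ≤ min (X (a + 1)) (Y (b + 1)) := min_le_min le_rfl hYb
    rw [cornerPlan, min_eq_left h, min_eq_left (h.trans hYb)]
    linarith
  · have : min (X a) (Y (b + 1)) ≤ min (X (a + 1)) (Y (b + 1)) := min_le_min hXa le_rfl
    rw [cornerPlan, min_eq_right h, min_eq_right (h.trans hXa)]
    linarith

lemma lt_of_cornerPlan_ne_zero (hX : Monotone X) (hY : Monotone Y) (h : cornerPlan X Y a b ≠ 0) :
    Y b < X (a + 1) ∧ X a < Y (b + 1) :=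
  ⟨lt_of_not_ge fun h' => h (cornerPlan_eq_zero_of_le hX hY h'),
    lt_of_not_ge fun h' => h (cornerPlan_eq_zero_of_ge hX hY h')⟩

lemma le_of_cornerPlan_ne_zero (hX : Monotone X) (hY : Monotone Y) {a' b' : ℕ}
    (h : cornerPlan X Y a b ≠ 0) (h' : cornerPlan X Y a' b' ≠ 0) (ha : a < a') : b ≤ b' := by
  by_contra! hb
  have := (lt_of_cornerPlan_ne_zero hX hY h).1
  have := (lt_of_cornerPlan_ne_zero hX hY h').2
  have := hX (Nat.succ_le_of_lt ha)
  have := hY (Nat.succ_le_of_lt hb)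
  linarith

lemma sum_range_cornerPlan_right (hX : Monotone X) {m : ℕ} (hm : X (a + 1) ≤ Y m)
    (h0 : Y 0 ≤ X a) : ∑ b ∈ range m, cornerPlan X Y a b = X (a + 1) - X a := by
  have hXa : X a ≤ X (a + 1) := hX a.le_succ
  have key : ∑ b ∈ range m, cornerPlan X Y a b =
      ∑ b ∈ range m, ((min (X (a + 1)) (Y (b + 1)) - min (X a) (Y (b + 1))) -
        (min (X (a + 1)) (Y b) - min (X a) (Y b))) :=
    sum_congr rfl fun b _ => by rw [cornerPlan]; ring
  rw [key, sum_range_sub (fun b => min (X (a + 1)) (Y b) - min (X a) (Y b)), min_eq_left hm,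
    min_eq_left (hXa.trans hm), min_eq_right (h0.trans hXa), min_eq_right h0]
  ring

lemma sum_range_cornerPlan_left (hY : Monotone Y) {m : ℕ} (hm : Y (b + 1) ≤ X m)
    (h0 : X 0 ≤ Y b) : ∑ a ∈ range m, cornerPlan X Y a b = Y (b + 1) - Y b := by
  simp only [cornerPlan_comm (X := X)]
  exact sum_range_cornerPlan_right hY hm h0

end CornerPlan

lemma card_le_two_mul_sub_one_of_isChain {n : ℕ} (s : Finset (Fin n × Fin n))
    (hs : IsChain (· ≤ ·) (s : Set (Fin n × Fin n))) : #s ≤ 2 * n - 1 := by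
  have hmaps : Set.MapsTo (fun p : Fin n × Fin n => (p.1 : ℕ) + p.2) s (range (2 * n - 1)) := by
    intro p _
    simp only [coe_range, Set.mem_Iio]
    omega
  have hinj : Set.InjOn (fun p : Fin n × Fin n => (p.1 : ℕ) + p.2) s := by
    intro p hp q hq hpq
    simp only at hpq
    rcases eq_or_ne p q with h | h
    · exact h
    rcases hs hp hq h with ⟨h1, h2⟩ | ⟨h1, h2⟩ <;>
      · rw [Fin.le_def] at h1 h2
        ext <;> omega
  simpa using card_le_card_of_injOn _ hmaps hinj

section RowNormalize

variable {n : ℕ} (M : Matrix (Fin n) (Fin n) ℝ) (x : Fin n → ℝ)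

/-- Where `x i = 0` any stochastic row would do; the unit row keeps the support a chain. -/
noncomputable def rowNormalize : Matrix (Fin n) (Fin n) ℝ :=
  fun i j => if x i = 0 then (1 : Matrix (Fin n) (Fin n) ℝ) i j else M i j / x i

variable {M x}

lemma lowerRS_rowNormalize (hM0 : ∀ i j, 0 ≤ M i j) (hMtri : ∀ i j, i < j → M i j = 0)
    (hrow : ∀ i, ∑ j, M i j = x i) (hx0 : ∀ i, 0 ≤ x i) : LowerRS (rowNormalize M x) := by
  refine ⟨fun i j => ?_, fun i j hij => ?_, fun i => ?_⟩ <;> by_cases hxi : x i = 0 <;>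
    simp only [rowNormalize, hxi, if_true, if_false]
  · rw [one_apply]; split_ifs <;> norm_num
  · exact div_nonneg (hM0 i j) (hx0 i)
  · exact one_apply_ne' hij.ne'
  · rw [hMtri i j hij, zero_div]
  · simp [one_apply]
  · rw [← sum_div, hrow, div_self hxi]

lemma vecMul_rowNormalize (hM0 : ∀ i j, 0 ≤ M i j) (hrow : ∀ i, ∑ j, M i j = x i) :
    vecMul x (rowNormalize M x) = fun j => ∑ i, M i j := by
  funext j
  simp only [vecMul, dotProduct]
  refine sum_congr rfl fun i _ => ?_
  by_cases hxi : x i = 0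
  · have hMi : M i j = 0 :=
      (sum_eq_zero_iff_of_nonneg fun j _ => hM0 i j).mp (by rw [hrow, hxi]) j (mem_univ j)
    simp [rowNormalize, hxi, hMi]
  · simp only [rowNormalize, hxi, if_false]
    field_simp

lemma isChain_support_rowNormalize (hMtri : ∀ i j, i < j → M i j = 0)
    (hM : IsChain (· ≤ ·) {p : Fin n × Fin n | M p.1 p.2 ≠ 0})
    (hx0 : ∀ i, 0 ≤ x i) (hxs : Antitone x) :
    IsChain (· ≤ ·) {p : Fin n × Fin n | rowNormalize M x p.1 p.2 ≠ 0} := by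
  have hsupp : ∀ i j, rowNormalize M x i j ≠ 0 →
      (x i = 0 ∧ i = j) ∨ (x i ≠ 0 ∧ M i j ≠ 0) := by
    intro i j h
    by_cases hxi : x i = 0
    · simp only [rowNormalize, hxi, if_true, one_apply] at h
      exact .inl ⟨hxi, by by_contra hij; simp [hij] at h⟩
    · simp only [rowNormalize, hxi, if_false] at h
      exact .inr ⟨hxi, left_ne_zero_of_mul h⟩
  -- the zero entries of the antitone `x` come last
  have hmixed : ∀ i a b, x i = 0 → x a ≠ 0 → M a b ≠ 0 → (a, b) ≤ (i, i) := by
    intro i a b hxi hxa hMab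
    have hai : a < i := lt_of_not_ge fun h => hxa (le_antisymm (hxi ▸ hxs h) (hx0 a))
    exact ⟨hai.le, (le_of_not_gt fun h => hMab (hMtri a b h)).trans hai.le⟩
  rintro ⟨i, j⟩ hp ⟨a, b⟩ hq -
  rcases hsupp i j hp with ⟨hxi, rfl⟩ | ⟨hxi, hMij⟩ <;>
    rcases hsupp a b hq with ⟨hxa, rfl⟩ | ⟨hxa, hMab⟩
  · rcases le_total i a with h | h
    · exact .inl ⟨h, h⟩
    · exact .inr ⟨h, h⟩
  · exact .inr (hmixed i a b hxi hxa hMab)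
  · exact .inl (hmixed a i j hxa hxi hMij)
  · rcases eq_or_ne (i, j) (a, b) with h | h
    · exact .inl h.le
    · exact hM hMij hMab h

end RowNormalize

section PrefixSums

variable {n : ℕ} {x y : Fin n → ℝ}

lemma psum_zero (x : Fin n → ℝ) : psum x 0 = 0 := by simp [psum]

lemma psum_of_le (x : Fin n → ℝ) {k : ℕ} (hk : n ≤ k) : psum x k = ∑ i, x i := by
  rw [psum, filter_true_of_mem fun i _ => i.isLt.trans_le hk]

lemma psum_succ (x : Fin n → ℝ) {k : ℕ} (hk : k < n) :
    psum x (k + 1) = psum x k + x ⟨k, hk⟩ := by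
  have h : filter (fun i : Fin n => (i : ℕ) < k + 1) univ
      = insert ⟨k, hk⟩ (filter (fun i : Fin n => (i : ℕ) < k) univ) := by
    ext i
    simp only [Order.lt_add_one_iff, mem_filter, mem_univ, true_and, mem_insert, Fin.ext_iff]
    omega
  rw [psum, h, sum_insert (by simp), psum, add_comm]

lemma psum_nonneg (hx : ∀ i, 0 ≤ x i) (k : ℕ) : 0 ≤ psum x k :=
  sum_nonneg fun i _ => hx i

lemma monotone_psum (hx : ∀ i, 0 ≤ x i) : Monotone (psum x) := fun _ _ hab =>
  sum_le_sum_of_subset_of_nonneg (monotone_filter_right _ fun _ _ h => h.trans_le hab)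
    fun i _ _ => hx i

lemma Maj.psum_le (h : Maj x y) (k : ℕ) : psum x k ≤ psum y k := by
  rcases lt_or_ge k n with hk | hk
  · exact h.1 k hk
  · rw [psum_of_le x hk, psum_of_le y hk, h.2]

end PrefixSums

section TransportPlan

variable {n : ℕ} {x y : Fin n → ℝ}

def transportPlan (x y : Fin n → ℝ) : Matrix (Fin n) (Fin n) ℝ :=
  fun i j => cornerPlan (psum x) (psum y) i j

lemma transportPlan_nonneg (hx0 : ∀ i, 0 ≤ x i) (hy0 : ∀ i, 0 ≤ y i) (i j : Fin n) :
    0 ≤ transportPlan x y i j :=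
  cornerPlan_nonneg (monotone_psum hx0) (monotone_psum hy0)

lemma transportPlan_eq_zero_of_lt (hx0 : ∀ i, 0 ≤ x i) (hy0 : ∀ i, 0 ≤ y i)
    (hmaj : Maj x y) {i j : Fin n} (hij : i < j) :
    transportPlan x y i j = 0 :=
  cornerPlan_eq_zero_of_le (monotone_psum hx0) (monotone_psum hy0)
    ((hmaj.psum_le _).trans (monotone_psum hy0 (Nat.succ_le_of_lt hij)))

lemma sum_transportPlan_row (hx0 : ∀ i, 0 ≤ x i) (hmaj : Maj x y) (i : Fin n) :
    ∑ j, transportPlan x y i j = x i := by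
  have hXn : psum x (i + 1) ≤ psum y n :=
    (monotone_psum hx0 i.isLt).trans (hmaj.psum_le n)
  simp only [transportPlan]
  rw [Fin.sum_univ_eq_sum_range (fun j => cornerPlan (psum x) (psum y) i j),
    sum_range_cornerPlan_right (monotone_psum hx0) hXn (psum_zero y ▸ psum_nonneg hx0 _),
    psum_succ x i.isLt]
  ring

lemma sum_transportPlan_col (hy0 : ∀ i, 0 ≤ y i) (hmaj : Maj x y) (j : Fin n) :
    ∑ i, transportPlan x y i j = y j := by
  have hYn : psum y (j + 1) ≤ psum x n := by
    rw [psum_of_le x le_rfl, hmaj.2, ← psum_of_le y le_rfl]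
    exact monotone_psum hy0 j.isLt
  simp only [transportPlan]
  rw [Fin.sum_univ_eq_sum_range (fun i => cornerPlan (psum x) (psum y) i j),
    sum_range_cornerPlan_left (monotone_psum hy0) hYn (psum_zero x ▸ psum_nonneg hy0 _),
    psum_succ y j.isLt]
  ring

lemma isChain_support_transportPlan (hx0 : ∀ i, 0 ≤ x i) (hy0 : ∀ i, 0 ≤ y i) :
    IsChain (· ≤ ·) {p : Fin n × Fin n | transportPlan x y p.1 p.2 ≠ 0} := by
  have hle {i j a b : Fin n} (h : transportPlan x y i j ≠ 0) (h' : transportPlan x y a b ≠ 0)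
      (hia : i < a) : j ≤ b :=
    le_of_cornerPlan_ne_zero (monotone_psum hx0) (monotone_psum hy0) h h' hia
  rintro ⟨i, j⟩ hp ⟨a, b⟩ hq -
  rcases lt_trichotomy i a with hia | rfl | hai
  · exact .inl ⟨hia.le, hle hp hq hia⟩
  · rcases le_total j b with h | h
    · exact .inl ⟨le_rfl, h⟩
    · exact .inr ⟨le_rfl, h⟩
  · exact .inr ⟨hai.le, hle hq hp hai⟩

end TransportPlan

theorem stmt8_general {n : ℕ} (x y : Fin n → ℝ)
    (hx0 : ∀ i, 0 ≤ x i) (hy0 : ∀ i, 0 ≤ y i)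
    (hxs : Antitone x)
    (hmaj : Maj x y) :
    ∃ L : Matrix (Fin n) (Fin n) ℝ, LowerRS L ∧
      (Finset.filter (fun p : Fin n × Fin n => L p.1 p.2 ≠ 0) Finset.univ).card ≤ 2 * n - 1 ∧
      y = Matrix.vecMul x L := by
  have hT0 := transportPlan_nonneg hx0 hy0
  have hTtri : ∀ i j, i < j → transportPlan x y i j = 0 :=
    fun _ _ => transportPlan_eq_zero_of_lt hx0 hy0 hmaj
  have hrow := sum_transportPlan_row hx0 hmaj
  refine ⟨rowNormalize (transportPlan x y) x, lowerRS_rowNormalize hT0 hTtri hrow hx0, ?_, ?_⟩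
  · refine card_le_two_mul_sub_one_of_isChain _ ?_
    simpa using isChain_support_rowNormalize hTtri (isChain_support_transportPlan hx0 hy0) hx0 hxs
  · rw [vecMul_rowNormalize hT0 hrow]
    exact funext fun j => (sum_transportPlan_col hy0 hmaj j).symm

theorem stmt8 {n : ℕ} (x y : Fin n → ℝ)
    (hx0 : ∀ i, 0 ≤ x i) (hy0 : ∀ i, 0 ≤ y i)
    (hxs : Antitone x) (hys : Antitone y)
    (hmaj : Maj x y) :
    ∃ L : Matrix (Fin n) (Fin n) ℝ, LowerRS L ∧
      (Finset.filter (fun p : Fin n × Fin n => L p.1 p.2 ≠ 0) Finset.univ).card ≤ 2 * n - 1 ∧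
      y = Matrix.vecMul x L :=
  stmt8_general x y hx0 hy0 hxs hmaj
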